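/- Fix V with orthonormal columns, Ŝ = Vᵀ(S − S_ref), and coefficient matrix Ξ. Any minimizer V̄ of F(V̄) = (1/2)‖ S − S_ref − V Ŝ − V̄ Ξ g(Ŝ) ‖_F² over all V̄ ∈ ℝ^{n×q}, when V and Ŝ come from the SVD of S − S_ref (so that the residual E = S − S_ref − V Ŝ satisfies Vᵀ E = 0), and when Ξ g(Ŝ) (Ξ g(Ŝ))ᵀ is invertible, automatically satisfies Vᵀ V̄ = 0. -/
import Mathlib

open Matrix

/-- Squared Frobenius norm. -/
noncomputable def frobSq {α β : Type*} [Fintype α] [Fintype β]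
    (M : Matrix α β ℝ) : ℝ := Matrix.trace (Mᵀ * M)

lemma frobSq_eq_sum {α β : Type*} [Fintype α] [Fintype β] (M : Matrix α β ℝ) :
    frobSq M = ∑ j, ∑ i, (M i j) ^ 2 := by
  simp [frobSq, Matrix.trace, Matrix.mul_apply, Matrix.diag, sq]

lemma frobSq_nonneg {α β : Type*} [Fintype α] [Fintype β] (M : Matrix α β ℝ) :
    0 ≤ frobSq M := by
  rw [frobSq_eq_sum]; positivity

lemma frobSq_eq_zero {α β : Type*} [Fintype α] [Fintype β] (M : Matrix α β ℝ)
    (h : frobSq M = 0) : M = 0 := by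
  rw [frobSq_eq_sum] at h
  ext i j
  have h1 : ∀ j ∈ Finset.univ, (0:ℝ) ≤ ∑ i, (M i j) ^ 2 := by
    intro j _; positivity
  have h2 := (Finset.sum_eq_zero_iff_of_nonneg h1).mp h j (Finset.mem_univ j)
  have h3 : ∀ i ∈ Finset.univ, (0:ℝ) ≤ (M i j) ^ 2 := by intro i _; positivity
  have := (Finset.sum_eq_zero_iff_of_nonneg h3).mp h2 i (Finset.mem_univ i)
  simpa using pow_eq_zero_iff (n := 2) (by norm_num) |>.mp this

lemma frobSq_add {α β : Type*} [Fintype α] [Fintype β] (A B : Matrix α β ℝ) :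
    frobSq (A + B) = frobSq A + frobSq B + 2 * Matrix.trace (Aᵀ * B) := by
  have hBA : Matrix.trace (Bᵀ * A) = Matrix.trace (Aᵀ * B) := by
    rw [← Matrix.trace_transpose (Bᵀ * A), Matrix.transpose_mul, Matrix.transpose_transpose]
  simp only [frobSq, Matrix.transpose_add, Matrix.add_mul, Matrix.mul_add,
    Matrix.trace_add, hBA]
  ring

lemma frobSq_decomp {a b c : Type*} [Fintype a] [Fintype b] [Fintype c]
    (E : Matrix a b ℝ) (G : Matrix c b ℝ) (Wstar W : Matrix a c ℝ)
    (hres : (E - Wstar * G) * Gᵀ = 0) :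
    frobSq (E - W * G) = frobSq (E - Wstar * G) + frobSq ((Wstar - W) * G) := by
  have h1 : E - W * G = (E - Wstar * G) + (Wstar - W) * G := by
    rw [Matrix.sub_mul]; abel
  have hGz : G * (E - Wstar * G)ᵀ = 0 := by
    have := congrArg Matrix.transpose hres
    simpa [Matrix.transpose_mul] using this
  have hcross : Matrix.trace ((E - Wstar * G)ᵀ * ((Wstar - W) * G)) = 0 := by
    rw [← Matrix.trace_mul_comm, Matrix.mul_assoc, hGz, Matrix.mul_zero, Matrix.trace_zero]
  rw [h1, frobSq_add, hcross]; ring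

/-- With V orthonormal, Ŝ = Vᵀ(S − S_ref) (so the residual E = S − S_ref − V Ŝ
satisfies Vᵀ E = 0), and G = Ξ g(Ŝ) such that G Gᵀ is invertible, any minimizer V̄ of
V̄ ↦ (1/2)‖S − S_ref − V Ŝ − V̄ G‖_F² automatically satisfies Vᵀ V̄ = 0. -/
theorem minimizer_is_orthogonal {n k r q m : ℕ}
    (S Sref : Matrix (Fin n) (Fin k) ℝ)
    (V : Matrix (Fin n) (Fin r) ℝ) (hV : Vᵀ * V = 1)
    (Xi : Matrix (Fin q) (Fin m) ℝ) (gShat : Matrix (Fin m) (Fin k) ℝ)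
    (hGG : Invertible ((Xi * gShat) * (Xi * gShat)ᵀ)) :
    let Shat : Matrix (Fin r) (Fin k) ℝ := Vᵀ * (S - Sref)
    let E : Matrix (Fin n) (Fin k) ℝ := S - Sref - V * Shat
    let G : Matrix (Fin q) (Fin k) ℝ := Xi * gShat
    ∀ Vbar : Matrix (Fin n) (Fin q) ℝ,
      (∀ W : Matrix (Fin n) (Fin q) ℝ,
        (1 / 2) * frobSq (E - Vbar * G) ≤ (1 / 2) * frobSq (E - W * G)) →
      Vᵀ * Vbar = 0 := by
  intro Shat E G Vbar hmin
  have hVE : Vᵀ * E = 0 := by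
    show Vᵀ * (S - Sref - V * (Vᵀ * (S - Sref))) = 0
    rw [Matrix.mul_sub, ← Matrix.mul_assoc, ← Matrix.mul_assoc, hV, Matrix.one_mul, sub_self]
  set Wstar : Matrix (Fin n) (Fin q) ℝ := E * Gᵀ * ⅟(G * Gᵀ) with hWstar
  have hres : (E - Wstar * G) * Gᵀ = 0 := by
    rw [Matrix.sub_mul, hWstar, Matrix.mul_assoc (E * Gᵀ * ⅟(G * Gᵀ)) G Gᵀ,
      Matrix.mul_assoc (E * Gᵀ) (⅟(G * Gᵀ)) (G * Gᵀ), invOf_mul_self, Matrix.mul_one, sub_self]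
  -- minimality at Wstar forces (Wstar - Vbar) * G = 0
  have hle := hmin Wstar
  have hdec := frobSq_decomp E G Wstar Vbar hres
  have hzero : frobSq ((Wstar - Vbar) * G) = 0 := by
    have h0 : frobSq (E - Vbar * G) ≤ frobSq (E - Wstar * G) := by linarith
    have := frobSq_nonneg ((Wstar - Vbar) * G)
    linarith
  have hDG : (Wstar - Vbar) * G = 0 := frobSq_eq_zero _ hzero
  have hVb : Vbar = Wstar := by
    have h1 : Wstar * G = Vbar * G := by
      have := sub_eq_zero.mp (by rwa [Matrix.sub_mul] at hDG)
      exact this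
    have h2 : Vbar * (G * Gᵀ) = E * Gᵀ := by
      rw [← Matrix.mul_assoc, ← h1, hWstar,
        Matrix.mul_assoc (E * Gᵀ * ⅟(G * Gᵀ)) G Gᵀ,
        Matrix.mul_assoc (E * Gᵀ) (⅟(G * Gᵀ)) (G * Gᵀ), invOf_mul_self, Matrix.mul_one]
    have h3 : Vbar * (G * Gᵀ) * ⅟(G * Gᵀ) = E * Gᵀ * ⅟(G * Gᵀ) := by rw [h2]
    rw [Matrix.mul_assoc, mul_invOf_self, Matrix.mul_one] at h3
    rw [hWstar, ← h3]
  rw [hVb, hWstar, ← Matrix.mul_assoc, ← Matrix.mul_assoc, hVE, Matrix.zero_mul, Matrix.zero_mul]
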